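/- arXiv:2411.02199 — 3 statements merged into one kernel-verified Lean document; each statement's English description precedes it below -/
import Mathlib

section
/- Suppose a real sequence (a_t)_{t≥0} satisfies a_{t+1} = a_t + c/(1 + b e^{a_t}) for some 0 ≤ c ≤ 1 and b ≥ 0. Let x(t) be the unique solution of the ODE x'(t) = c/(1 + b e^{x(t)}) with x(0) = a₀, equivalently x(t) + b e^{x(t)} = c t + a₀ + b e^{a₀}. Then x(t) ≤ a_t ≤ x(t) + c/(1 + b e^{a₀}) for all integers t ≥ 0. -/
/-!
Both bounds compare the iteration with the ODE through the conserved quantity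
`F y = potential b y = y + b e^y`, which is strictly increasing and convex with `F' y = 1 + b e^y`, and which
grows by exactly `c` per unit time along the flow. One step `a ↦ a + δ`, `δ = c / F' a`, raises
`F` by at least `δ F' a = c` (tangent line below a convex function), so `F (a t) ≥ c t + F (a 0)`.
Shifting down by `d = c / F' (a 0) ≥ δ` raises it by at most `δ F' (a + δ - d) ≤ δ F' a = c`, so
`F (a t - d) ≤ c t + F (a 0)`. Monotonicity of `F` turns both into bounds against `x t`.
-/

open Real

noncomputable def potential (b y : ℝ) : ℝ := y + b * exp y

section Potential

variable {b : ℝ}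

lemma potential_strictMono (hb : 0 ≤ b) : StrictMono (potential b) :=
  strictMono_id.add_monotone (exp_monotone.const_mul hb)

lemma potential_add_sub_potential (y δ : ℝ) :
    potential b (y + δ) - potential b y = δ + b * exp y * (exp δ - 1) := by
  rw [potential, potential, exp_add]; ring

lemma mul_one_add_le_potential_add_sub (hb : 0 ≤ b) (y δ : ℝ) :
    δ * (1 + b * exp y) ≤ potential b (y + δ) - potential b y := by
  have hexp : δ ≤ exp δ - 1 := by linarith [add_one_le_exp δ]
  rw [potential_add_sub_potential]
  nlinarith [mul_le_mul_of_nonneg_left hexp (mul_nonneg hb (exp_pos y).le)]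

lemma potential_add_sub_le_mul (hb : 0 ≤ b) (y δ : ℝ) :
    potential b (y + δ) - potential b y ≤ δ * (1 + b * exp (y + δ)) := by
  have hexp : exp δ - 1 ≤ δ * exp δ := by
    have h := one_sub_le_exp_neg δ
    have hmul : exp (-δ) * exp δ = 1 := by rw [← exp_add, neg_add_cancel, exp_zero]
    nlinarith [mul_le_mul_of_nonneg_right h (exp_pos δ).le]
  rw [potential_add_sub_potential, exp_add]
  nlinarith [mul_le_mul_of_nonneg_left hexp (mul_nonneg hb (exp_pos y).le)]

end Potential

section Iteration

variable {a : ℕ → ℝ} {b c : ℝ}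

lemma one_add_mul_exp_pos (hb : 0 ≤ b) (y : ℝ) : 0 < 1 + b * exp y := by
  have := mul_nonneg hb (exp_pos y).le
  linarith

lemma step_mul_one_add_mul_exp (hb : 0 ≤ b) (y : ℝ) :
    c / (1 + b * exp y) * (1 + b * exp y) = c :=
  div_mul_cancel₀ c (one_add_mul_exp_pos hb y).ne'

variable (hb : 0 ≤ b) (hrec : ∀ t : ℕ, a (t + 1) = a t + c / (1 + b * exp (a t)))
include hb hrec

lemma monotone_of_step (hc : 0 ≤ c) : Monotone a :=
  monotone_nat_of_le_succ fun t => by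
    rw [hrec t]
    exact le_add_of_nonneg_right (div_nonneg hc (one_add_mul_exp_pos hb _).le)

lemma add_potential_le_potential (t : ℕ) :
    c * t + potential b (a 0) ≤ potential b (a t) := by
  induction t with
  | zero => simp
  | succ n ih =>
    have hstep := mul_one_add_le_potential_add_sub hb (a n) (c / (1 + b * exp (a n)))
    rw [step_mul_one_add_mul_exp hb, ← hrec n] at hstep
    push_cast
    linarith

lemma potential_sub_le_add_potential (hc : 0 ≤ c) (t : ℕ) :
    potential b (a t - c / (1 + b * exp (a 0))) ≤ c * t + potential b (a 0) := by
  set d := c / (1 + b * exp (a 0))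
  have hd : 0 ≤ d := div_nonneg hc (one_add_mul_exp_pos hb _).le
  induction t with
  | zero => simpa using (potential_strictMono hb).monotone (sub_le_self (a 0) hd)
  | succ n ih =>
    set δ := c / (1 + b * exp (a n))
    have hδ : 0 ≤ δ := div_nonneg hc (one_add_mul_exp_pos hb _).le
    have hδd : δ ≤ d := div_le_div_of_nonneg_left hc (one_add_mul_exp_pos hb _)
      (by gcongr; exact monotone_of_step hb hrec hc (Nat.zero_le n))
    have hslope : δ * (1 + b * exp (a n - d + δ)) ≤ c := by
      rw [← step_mul_one_add_mul_exp (c := c) hb (a n)]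
      gcongr
      linarith
    have hstep := potential_add_sub_le_mul hb (a n - d) δ
    rw [show a n - d + δ = a (n + 1) - d by rw [hrec n]; ring] at hstep hslope
    push_cast
    linarith

end Iteration

theorem stmt5_general (a : ℕ → ℝ) (b c : ℝ) (hb : 0 ≤ b) (hc0 : 0 ≤ c)
    (hrec : ∀ t : ℕ, a (t + 1) = a t + c / (1 + b * Real.exp (a t)))
    (x : ℝ → ℝ)
    (hx : ∀ t : ℝ, 0 ≤ t →
      x t + b * Real.exp (x t) = c * t + a 0 + b * Real.exp (a 0)) :
    ∀ t : ℕ, x t ≤ a t ∧ a t ≤ x t + c / (1 + b * Real.exp (a 0)) := by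
  intro t
  have hxt : potential b (x t) = c * t + potential b (a 0) := by
    rw [potential, potential, hx t t.cast_nonneg]; ring
  have hF := potential_strictMono hb
  constructor
  · exact hF.le_iff_le.mp (hxt ▸ add_potential_le_potential hb hrec t)
  · have := hF.le_iff_le.mp (hxt ▸ potential_sub_le_add_potential hb hrec hc0 t)
    linarith

theorem stmt5 (a : ℕ → ℝ) (b c : ℝ) (hb : 0 ≤ b) (hc0 : 0 ≤ c) (hc1 : c ≤ 1)
    (hrec : ∀ t : ℕ, a (t + 1) = a t + c / (1 + b * Real.exp (a t)))
    (x : ℝ → ℝ)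
    (hx : ∀ t : ℝ, 0 ≤ t →
      x t + b * Real.exp (x t) = c * t + a 0 + b * Real.exp (a 0)) :
    ∀ t : ℕ, x t ≤ a t ∧ a t ≤ x t + c / (1 + b * Real.exp (a 0)) :=
  stmt5_general a b c hb hc0 hrec x hx
end

section
/- Let D₀, D₁, …, D_T be a martingale difference sequence taking values in a space with norm ‖·‖_F, and suppose Σ_{t=0}^T ‖D_t‖_∞² ≤ c_T² where ‖D_t‖_∞ denotes the essential supremum of ‖D_t‖_F. Then for every ε > 0, P[ sup_{s ≤ T} ‖Σ_{t=0}^s D_t‖_F ≥ ε ] ≤ 2 exp(-ε² / (2 c_T²)). -/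
/-!
Pinelis' argument for `X s = cosh (λ ‖S s‖)`, where `S s` are the partial sums.
Writing `‖f + d‖² = ‖f‖² + 2 ‖f‖ x + ‖d‖²` with `|x| ≤ ‖d‖ ≤ C`, convexity of `u ↦ cosh √u`
between `(‖f‖ - C)²` and `(‖f‖ + C)²` gives
`cosh ‖f + d‖ ≤ cosh ‖f‖ cosh C + (sinh C / C) ⟪∇, d⟫`, with `∇` the gradient of `cosh ‖·‖` at `f`,
while the tangent-line bound gives `cosh ‖f‖ + ⟪∇, d⟫ ≤ cosh ‖f + d‖`. The gradient term has
conditional mean zero, so the first bound yields `E X T ≤ ∏ cosh (λ C t) ≤ exp (λ² c² / 2)` and the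
second makes `X` a nonnegative submartingale. Doob's maximal inequality then bounds the probability
by `exp (λ² c² / 2) / cosh (λ ε) ≤ 2 exp (λ² c² / 2 - λ ε)`, and `λ = ε / c²` is optimal.
-/

open MeasureTheory Real Set
open scoped RealInnerProductSpace

namespace Real

lemma convexOn_sinh_Ici : ConvexOn ℝ (Ici 0) sinh := by
  refine MonotoneOn.convexOn_of_deriv (convex_Ici 0) continuous_sinh.continuousOn
    differentiable_sinh.differentiableOn ?_
  rw [interior_Ici, deriv_sinh]
  intro x hx y hy hxy
  exact cosh_le_cosh.2 (by rwa [abs_of_pos hx, abs_of_pos hy])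

lemma sinh_div_le_sinh_div {r s : ℝ} (hr : 0 < r) (hrs : r ≤ s) :
    sinh r / r ≤ sinh s / s := by
  simpa using convexOn_sinh_Ici.secant_mono self_mem_Ici hr.le (hr.trans_le hrs).le
    hr.ne' (hr.trans_le hrs).ne' hrs

lemma convexOn_cosh_sqrt : ConvexOn ℝ (Ici 0) fun u ↦ cosh √u := by
  have hd : ∀ u : ℝ, 0 < u → HasDerivAt (fun u ↦ cosh √u) (sinh √u / √u / 2) u := fun u hu ↦
    ((hasDerivAt_cosh _).comp u (hasDerivAt_sqrt hu.ne')).congr_deriv (by field_simp)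
  refine MonotoneOn.convexOn_of_deriv (convex_Ici 0)
    (continuous_cosh.comp continuous_sqrt).continuousOn ?_ ?_ <;> rw [interior_Ici]
  · exact fun u hu ↦ (hd u hu).differentiableAt.differentiableWithinAt
  · intro u hu v hv huv
    rw [(hd u hu).deriv, (hd v hv).deriv]
    linarith [sinh_div_le_sinh_div (sqrt_pos.2 hu) (sqrt_le_sqrt huv)]

lemma cosh_sqrt_le {a x C : ℝ} (hx : |x| ≤ C) :
    cosh √(a ^ 2 + 2 * a * x + C ^ 2) ≤ cosh a * cosh C + x / C * (sinh a * sinh C) := by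
  obtain ⟨hxl, hxr⟩ := abs_le.1 hx
  rcases (abs_nonneg x |>.trans hx).eq_or_lt with rfl | hC
  · obtain rfl : x = 0 := by linarith
    simp [sqrt_sq_eq_abs]
  set θ := (x + C) / (2 * C)
  have hθ₀ : 0 ≤ θ := div_nonneg (by linarith) (by positivity)
  have hθ₁ : 0 ≤ 1 - θ := by
    rw [sub_nonneg, div_le_one (by positivity)]; linarith
  have h := convexOn_cosh_sqrt.2 (sq_nonneg (a + C)) (sq_nonneg (a - C)) hθ₀ hθ₁ (by ring)
  simp only [smul_eq_mul, sqrt_sq_eq_abs, cosh_abs] at h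
  have hcomb : θ * (a + C) ^ 2 + (1 - θ) * (a - C) ^ 2 = a ^ 2 + 2 * a * x + C ^ 2 := by
    simp only [θ]; field_simp; ring
  rw [hcomb] at h
  refine h.trans_eq ?_
  simp only [θ, cosh_add, cosh_sub]
  field_simp
  ring

lemma cosh_add_mul_sinh_le (a x : ℝ) : cosh a + x * sinh a ≤ cosh (a + x) := by
  rw [cosh_eq, sinh_eq, cosh_eq, exp_add, neg_add, exp_add]
  nlinarith [mul_le_mul_of_nonneg_left (add_one_le_exp x) (exp_pos a).le,
    mul_le_mul_of_nonneg_left (add_one_le_exp (-x)) (exp_pos (-a)).le]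

lemma prod_cosh_le_exp_sum_sq {ι : Type*} (s : Finset ι) (a : ι → ℝ) :
    ∏ i ∈ s, cosh (a i) ≤ exp ((∑ i ∈ s, a i ^ 2) / 2) := by
  rw [Finset.sum_div, exp_sum]
  exact Finset.prod_le_prod (fun i _ ↦ (cosh_pos _).le) fun i _ ↦ cosh_le_exp_half_sq _

lemma exp_le_two_mul_cosh (x : ℝ) : exp x ≤ 2 * cosh x := by
  rw [cosh_eq]; linarith [exp_pos (-x)]

lemma prod_cosh_div_cosh_le {ι : Type*} (s : Finset ι) (a : ι → ℝ) {c ε : ℝ} (hc : c ≠ 0)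
    (hac : ∑ i ∈ s, a i ^ 2 ≤ c ^ 2) :
    (∏ i ∈ s, cosh (ε / c ^ 2 * a i)) / cosh (ε / c ^ 2 * ε) ≤ 2 * exp (-ε ^ 2 / (2 * c ^ 2)) := by
  have hnum : ∏ i ∈ s, cosh (ε / c ^ 2 * a i) ≤ exp (ε ^ 2 / (2 * c ^ 2)) := by
    refine (prod_cosh_le_exp_sum_sq s _).trans (exp_le_exp.2 ?_)
    simp_rw [mul_pow, ← Finset.mul_sum]
    calc (ε / c ^ 2) ^ 2 * (∑ i ∈ s, a i ^ 2) / 2 ≤ (ε / c ^ 2) ^ 2 * c ^ 2 / 2 := by gcongr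
      _ = ε ^ 2 / (2 * c ^ 2) := by field_simp
  have hden : exp (ε ^ 2 / c ^ 2) ≤ 2 * cosh (ε / c ^ 2 * ε) := by
    convert exp_le_two_mul_cosh _ using 2
    field_simp
  rw [div_le_iff₀ (cosh_pos _)]
  calc ∏ i ∈ s, cosh (ε / c ^ 2 * a i) ≤ exp (ε ^ 2 / (2 * c ^ 2)) := hnum
    _ = exp (-ε ^ 2 / (2 * c ^ 2)) * exp (ε ^ 2 / c ^ 2) := by
        rw [← exp_add]; congr 1; field_simp; ring
    _ ≤ exp (-ε ^ 2 / (2 * c ^ 2)) * (2 * cosh (ε / c ^ 2 * ε)) := by gcongr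
    _ = 2 * exp (-ε ^ 2 / (2 * c ^ 2)) * cosh (ε / c ^ 2 * ε) := by ring

end Real

section InnerProductSpace

variable {E : Type*} [NormedAddCommGroup E] [InnerProductSpace ℝ E]

lemma abs_inner_div_norm_le (f d : E) : |⟪f, d⟫ / ‖f‖| ≤ ‖d‖ := by
  rw [abs_div, abs_norm]
  exact div_le_of_le_mul₀ (norm_nonneg _) (norm_nonneg _)
    ((abs_real_inner_le_norm f d).trans_eq (mul_comm _ _))

lemma norm_mul_inner_div_norm (f d : E) : ‖f‖ * (⟪f, d⟫ / ‖f‖) = ⟪f, d⟫ := by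
  rw [← mul_div_assoc]
  exact mul_div_cancel_left_of_imp fun h ↦ by rw [norm_eq_zero.1 h, inner_zero_left]

lemma norm_add_sq_eq_inner_div_norm (f d : E) :
    ‖f + d‖ ^ 2 = ‖f‖ ^ 2 + 2 * ‖f‖ * (⟪f, d⟫ / ‖f‖) + ‖d‖ ^ 2 := by
  rw [norm_add_sq_real, mul_assoc, norm_mul_inner_div_norm]

/-- The gradient of `cosh ‖·‖`; the junk value `sinh 0 / 0 = 0` makes it correct at `0` too. -/
noncomputable def coshNormGrad (f : E) : E := (sinh ‖f‖ / ‖f‖) • f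

lemma inner_coshNormGrad (f d : E) : ⟪coshNormGrad f, d⟫ = sinh ‖f‖ / ‖f‖ * ⟪f, d⟫ :=
  real_inner_smul_left _ _ _

lemma norm_coshNormGrad (f : E) : ‖coshNormGrad f‖ = sinh ‖f‖ := by
  rcases eq_or_ne f 0 with rfl | hf
  · simp [coshNormGrad]
  rw [coshNormGrad, norm_smul, norm_div, norm_norm, div_mul_cancel₀ _ (norm_ne_zero_iff.2 hf),
    Real.norm_eq_abs, abs_of_nonneg (sinh_nonneg_iff.2 (norm_nonneg f))]

lemma cosh_norm_add_inner_coshNormGrad_le (f d : E) :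
    cosh ‖f‖ + ⟪coshNormGrad f, d⟫ ≤ cosh ‖f + d‖ := by
  set x := ⟪f, d⟫ / ‖f‖
  have hx := abs_inner_div_norm_le f d
  have hsq : (‖f‖ + x) ^ 2 ≤ ‖f + d‖ ^ 2 := by
    rw [norm_add_sq_eq_inner_div_norm]
    nlinarith [sq_abs x, abs_nonneg x]
  calc cosh ‖f‖ + ⟪coshNormGrad f, d⟫ = cosh ‖f‖ + x * sinh ‖f‖ := by
        rw [inner_coshNormGrad]; ring
    _ ≤ cosh (‖f‖ + x) := cosh_add_mul_sinh_le _ _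
    _ ≤ cosh ‖f + d‖ := cosh_le_cosh.2 (sq_le_sq.1 hsq)

lemma cosh_norm_add_le {f d : E} {C : ℝ} (hd : ‖d‖ ≤ C) :
    cosh ‖f + d‖ ≤ cosh ‖f‖ * cosh C + sinh C / C * ⟪coshNormGrad f, d⟫ := by
  set x := ⟪f, d⟫ / ‖f‖
  have hx := abs_inner_div_norm_le f d
  have hsq : ‖f + d‖ ≤ √(‖f‖ ^ 2 + 2 * ‖f‖ * x + C ^ 2) := by
    rw [← sqrt_sq (norm_nonneg (f + d)), norm_add_sq_eq_inner_div_norm]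
    gcongr
  calc cosh ‖f + d‖ ≤ cosh √(‖f‖ ^ 2 + 2 * ‖f‖ * x + C ^ 2) :=
        cosh_le_cosh.2 (by rwa [abs_norm, abs_of_nonneg (sqrt_nonneg _)])
    _ ≤ cosh ‖f‖ * cosh C + x / C * (sinh ‖f‖ * sinh C) := cosh_sqrt_le (hx.trans hd)
    _ = _ := by rw [inner_coshNormGrad]; ring

end InnerProductSpace

namespace MeasureTheory

variable {Ω : Type*} {m : MeasurableSpace Ω} {μ : Measure Ω}

lemma Submartingale.measureReal_exists_le_le [IsFiniteMeasure μ] {ℱ : Filtration ℕ m}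
    {X : ℕ → Ω → ℝ} (hX : Submartingale X ℱ μ) (hX0 : 0 ≤ X) {y : ℝ} (hy : 0 < y) (T : ℕ) :
    μ.real {ω | ∃ s ≤ T, y ≤ X s ω} ≤ (∫ ω, X T ω ∂μ) / y := by
  have hset : {ω | ∃ s ≤ T, y ≤ X s ω} = {ω | (y.toNNReal : ℝ) ≤
      (Finset.range (T + 1)).sup' Finset.nonempty_range_add_one fun k ↦ X k ω} := by
    ext ω
    simp [Finset.le_sup'_iff, hy.le]
  have h := ENNReal.toReal_mono ENNReal.ofReal_ne_top (maximal_ineq hX hX0 (ε := y.toNNReal) T)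
  rw [← hset, ENNReal.toReal_mul, ENNReal.toReal_ofReal
    (setIntegral_nonneg_of_ae_restrict (ae_of_all _ (hX0 T)))] at h
  rw [le_div_iff₀ hy, mul_comm]
  simp only [ENNReal.coe_toReal, Real.coe_toNNReal _ hy.le] at h
  exact h.trans (setIntegral_le_integral (hX.integrable T) (ae_of_all _ (hX0 T)))

section InnerProductSpace

variable {E : Type*} [NormedAddCommGroup E] [InnerProductSpace ℝ E]

lemma condExp_inner_eq_zero [CompleteSpace E] {m' : MeasurableSpace Ω} {g D : Ω → E}
    (hg : StronglyMeasurable[m'] g) (hgD : Integrable (fun ω ↦ ⟪g ω, D ω⟫) μ)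
    (hD : Integrable D μ) (hD0 : μ[D | m'] =ᵐ[μ] 0) :
    μ[fun ω ↦ ⟪g ω, D ω⟫ | m'] =ᵐ[μ] 0 := by
  have h : μ[fun ω ↦ ⟪g ω, D ω⟫ | m'] =ᵐ[μ] fun ω ↦ ⟪g ω, μ[D | m'] ω⟫ :=
    condExp_bilin_of_stronglyMeasurable_left (innerSL ℝ) hg hgD hD
  filter_upwards [h, hD0] with ω hω h0
  rw [hω, h0, Pi.zero_apply, inner_zero_right, Pi.zero_apply]

lemma StronglyMeasurable.coshNormGrad {m' : MeasurableSpace Ω} {f : Ω → E}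
    (hf : StronglyMeasurable[m'] f) : StronglyMeasurable[m'] fun ω ↦ coshNormGrad (f ω) :=
  ((measurable_sinh.comp hf.norm.measurable).div hf.norm.measurable).stronglyMeasurable.smul hf

end InnerProductSpace

variable {E : Type*} [NormedAddCommGroup E] {ℱ : Filtration ℕ m} {D : ℕ → Ω → E} {C : ℕ → ℝ}

lemma StronglyAdapted.stronglyMeasurable_sum_range (hD : StronglyAdapted ℱ D) (s : ℕ) :
    StronglyMeasurable[ℱ s] fun ω ↦ ∑ t ∈ Finset.range (s + 1), D t ω :=
  Finset.stronglyMeasurable_fun_sum _ fun t ht ↦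
    (hD t).mono (ℱ.mono (Nat.lt_succ_iff.1 (Finset.mem_range.1 ht)))

lemma ae_norm_sum_range_le (hDC : ∀ t, ∀ᵐ ω ∂μ, ‖D t ω‖ ≤ C t) (s : ℕ) :
    ∀ᵐ ω ∂μ, ‖∑ t ∈ Finset.range (s + 1), D t ω‖ ≤ ∑ t ∈ Finset.range (s + 1), C t := by
  filter_upwards [ae_all_iff.2 hDC] with ω hω
  exact (norm_sum_le _ _).trans (Finset.sum_le_sum fun t _ ↦ hω t)

lemma integrable_cosh_norm_sum_range [IsFiniteMeasure μ] (hD : StronglyAdapted ℱ D)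
    (hDC : ∀ t, ∀ᵐ ω ∂μ, ‖D t ω‖ ≤ C t) (s : ℕ) :
    Integrable (fun ω ↦ cosh ‖∑ t ∈ Finset.range (s + 1), D t ω‖) μ := by
  have hX := continuous_cosh.comp_stronglyMeasurable (hD.stronglyMeasurable_sum_range s).norm
  refine .of_bound (hX.mono (ℱ.le s)).aestronglyMeasurable
    (cosh (∑ t ∈ Finset.range (s + 1), C t)) ?_
  filter_upwards [ae_norm_sum_range_le hDC s] with ω hω
  rw [norm_of_nonneg (cosh_pos _).le]
  exact cosh_strictMonoOn.monotoneOn (norm_nonneg _) ((norm_nonneg _).trans hω) hω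

variable [InnerProductSpace ℝ E]

lemma integrable_inner_coshNormGrad_sum_range [IsFiniteMeasure μ] (hD : StronglyAdapted ℱ D)
    (hDC : ∀ t, ∀ᵐ ω ∂μ, ‖D t ω‖ ≤ C t) (s : ℕ) :
    Integrable (fun ω ↦ ⟪coshNormGrad (∑ t ∈ Finset.range (s + 1), D t ω), D (s + 1) ω⟫) μ := by
  have hg := (hD.stronglyMeasurable_sum_range s).coshNormGrad.mono (ℱ.le s)
  have hD' := (hD (s + 1)).mono (ℱ.le (s + 1))
  refine .of_bound (hg.aestronglyMeasurable.inner hD'.aestronglyMeasurable)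
    (sinh (∑ t ∈ Finset.range (s + 1), C t) * C (s + 1)) ?_
  filter_upwards [ae_norm_sum_range_le hDC s, hDC (s + 1)] with ω hS hDω
  refine (norm_inner_le_norm _ _).trans ?_
  rw [norm_coshNormGrad]
  exact mul_le_mul (sinh_le_sinh.2 hS) hDω (norm_nonneg _)
    (sinh_nonneg_iff.2 ((norm_nonneg _).trans hS))

variable [CompleteSpace E]

lemma condExp_inner_coshNormGrad_sum_range [IsFiniteMeasure μ] (hD : StronglyAdapted ℱ D)
    (hDC : ∀ t, ∀ᵐ ω ∂μ, ‖D t ω‖ ≤ C t) (hmds : ∀ t, μ[D (t + 1) | ℱ t] =ᵐ[μ] 0) (s : ℕ) :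
    μ[fun ω ↦ ⟪coshNormGrad (∑ t ∈ Finset.range (s + 1), D t ω), D (s + 1) ω⟫ | ℱ s]
      =ᵐ[μ] 0 :=
  condExp_inner_eq_zero (hD.stronglyMeasurable_sum_range s).coshNormGrad
    (integrable_inner_coshNormGrad_sum_range hD hDC s)
    (.of_bound ((hD (s + 1)).mono (ℱ.le _)).aestronglyMeasurable _ (hDC (s + 1))) (hmds s)

lemma submartingale_cosh_norm_sum_range [IsFiniteMeasure μ] (hD : StronglyAdapted ℱ D)
    (hDC : ∀ t, ∀ᵐ ω ∂μ, ‖D t ω‖ ≤ C t) (hmds : ∀ t, μ[D (t + 1) | ℱ t] =ᵐ[μ] 0) :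
    Submartingale (fun s ω ↦ cosh ‖∑ t ∈ Finset.range (s + 1), D t ω‖) ℱ μ := by
  have hint := integrable_cosh_norm_sum_range hD hDC
  refine submartingale_of_condExp_sub_nonneg_nat (fun s ↦ continuous_cosh.comp_stronglyMeasurable
    (hD.stronglyMeasurable_sum_range s).norm) hint fun s ↦ ?_
  have hstep : ∀ ω, ⟪coshNormGrad (∑ t ∈ Finset.range (s + 1), D t ω), D (s + 1) ω⟫ ≤
      cosh ‖∑ t ∈ Finset.range (s + 1 + 1), D t ω‖ - cosh ‖∑ t ∈ Finset.range (s + 1), D t ω‖ :=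
    fun ω ↦ by
      rw [Finset.sum_range_succ _ (s + 1), le_sub_iff_add_le']
      exact cosh_norm_add_inner_coshNormGrad_le _ _
  have hmono := condExp_mono (m := ℱ s) (integrable_inner_coshNormGrad_sum_range hD hDC s)
    ((hint (s + 1)).sub (hint s)) (ae_of_all _ hstep)
  filter_upwards [hmono, condExp_inner_coshNormGrad_sum_range hD hDC hmds s] with ω h h0
  simpa [h0] using h

lemma integral_cosh_norm_sum_range_le [IsProbabilityMeasure μ] (hD : StronglyAdapted ℱ D)
    (hDC : ∀ t, ∀ᵐ ω ∂μ, ‖D t ω‖ ≤ C t) (hmds : ∀ t, μ[D (t + 1) | ℱ t] =ᵐ[μ] 0) (s : ℕ) :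
    ∫ ω, cosh ‖∑ t ∈ Finset.range (s + 1), D t ω‖ ∂μ ≤ ∏ t ∈ Finset.range (s + 1), cosh (C t) := by
  induction s with
  | zero =>
    have hle : ∀ᵐ ω ∂μ, cosh ‖∑ t ∈ Finset.range 1, D t ω‖ ≤ cosh (C 0) := by
      filter_upwards [hDC 0] with ω hω
      rw [Finset.sum_range_one]
      exact cosh_strictMonoOn.monotoneOn (norm_nonneg _) ((norm_nonneg _).trans hω) hω
    simpa using integral_mono_ae (integrable_cosh_norm_sum_range hD hDC 0) (integrable_const _) hle
  | succ s ih =>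
    set Z := fun ω ↦ ⟪coshNormGrad (∑ t ∈ Finset.range (s + 1), D t ω), D (s + 1) ω⟫
    have hZ : Integrable Z μ := integrable_inner_coshNormGrad_sum_range hD hDC s
    have hZ0 : ∫ ω, Z ω ∂μ = 0 := by
      rw [← integral_condExp (ℱ.le s),
        integral_congr_ae (condExp_inner_coshNormGrad_sum_range hD hDC hmds s)]
      simp
    have hX := integrable_cosh_norm_sum_range hD hDC s
    have hle : ∀ᵐ ω ∂μ, cosh ‖∑ t ∈ Finset.range (s + 1 + 1), D t ω‖ ≤
        cosh ‖∑ t ∈ Finset.range (s + 1), D t ω‖ * cosh (C (s + 1)) +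
          sinh (C (s + 1)) / C (s + 1) * Z ω := by
      filter_upwards [hDC (s + 1)] with ω hω
      rw [Finset.sum_range_succ _ (s + 1)]
      exact cosh_norm_add_le hω
    calc ∫ ω, cosh ‖∑ t ∈ Finset.range (s + 1 + 1), D t ω‖ ∂μ
        ≤ ∫ ω, (cosh ‖∑ t ∈ Finset.range (s + 1), D t ω‖ * cosh (C (s + 1)) +
            sinh (C (s + 1)) / C (s + 1) * Z ω) ∂μ :=
          integral_mono_ae (integrable_cosh_norm_sum_range hD hDC (s + 1))
            ((hX.mul_const _).add (hZ.const_mul _)) hle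
      _ = (∫ ω, cosh ‖∑ t ∈ Finset.range (s + 1), D t ω‖ ∂μ) * cosh (C (s + 1)) := by
          rw [integral_add (hX.mul_const _) (hZ.const_mul _), integral_mul_const,
            integral_const_mul, hZ0, mul_zero, add_zero]
      _ ≤ (∏ t ∈ Finset.range (s + 1), cosh (C t)) * cosh (C (s + 1)) :=
          mul_le_mul_of_nonneg_right ih (cosh_pos _).le
      _ = ∏ t ∈ Finset.range (s + 1 + 1), cosh (C t) := (Finset.prod_range_succ _ _).symm

end MeasureTheory

theorem stmt9_general {Ω : Type*} {m : MeasurableSpace Ω} {μ : Measure Ω} [IsProbabilityMeasure μ]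
    {E : Type*} [NormedAddCommGroup E] [InnerProductSpace ℝ E] [CompleteSpace E]
    (ℱ : Filtration ℕ m)
    (D : ℕ → Ω → E) (T : ℕ)
    (hadapted : StronglyAdapted ℱ D)
    (hmds : ∀ t : ℕ, μ[D (t + 1) | ℱ t] =ᵐ[μ] 0)
    (c : ℝ) (C : ℕ → ℝ)
    (hC : ∀ t, ∀ᵐ ω ∂μ, ‖D t ω‖ ≤ C t)
    (hc : ∑ t ∈ Finset.range (T + 1), C t ^ 2 ≤ c ^ 2)
    (ε : ℝ) (hε : 0 < ε) :
    (μ {ω | ∃ s ≤ T, ε ≤ ‖∑ t ∈ Finset.range (s + 1), D t ω‖}).toReal ≤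
      2 * Real.exp (-ε ^ 2 / (2 * c ^ 2)) := by
  rcases eq_or_ne c 0 with rfl | hc0
  · refine measureReal_le_one.trans ?_
    norm_num
  set l := ε / c ^ 2
  have hl : 0 < l := by positivity
  have hD : StronglyAdapted ℱ fun t ω ↦ l • D t ω := fun t ↦ (hadapted t).const_smul l
  have hDC : ∀ t, ∀ᵐ ω ∂μ, ‖l • D t ω‖ ≤ l * C t := fun t ↦ by
    filter_upwards [hC t] with ω hω
    rw [norm_smul, norm_of_nonneg hl.le]
    gcongr
  have hmds' : ∀ t, μ[fun ω ↦ l • D (t + 1) ω | ℱ t] =ᵐ[μ] 0 := fun t ↦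
    (condExp_smul l _ _).trans (by filter_upwards [hmds t] with ω h; simp [h])
  have hsub : {ω | ∃ s ≤ T, ε ≤ ‖∑ t ∈ Finset.range (s + 1), D t ω‖} ⊆
      {ω | ∃ s ≤ T, cosh (l * ε) ≤ cosh ‖∑ t ∈ Finset.range (s + 1), l • D t ω‖} := by
    rintro ω ⟨s, hs, h⟩
    refine ⟨s, hs, cosh_strictMonoOn.monotoneOn (mul_pos hl hε).le (norm_nonneg _) ?_⟩
    rw [← Finset.smul_sum, norm_smul, norm_of_nonneg hl.le]
    gcongr
  calc μ.real {ω | ∃ s ≤ T, ε ≤ ‖∑ t ∈ Finset.range (s + 1), D t ω‖}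
      ≤ μ.real {ω | ∃ s ≤ T,
          cosh (l * ε) ≤ cosh ‖∑ t ∈ Finset.range (s + 1), l • D t ω‖} :=
        measureReal_mono hsub
    _ ≤ (∫ ω, cosh ‖∑ t ∈ Finset.range (T + 1), l • D t ω‖ ∂μ) / cosh (l * ε) :=
        (submartingale_cosh_norm_sum_range hD hDC hmds').measureReal_exists_le_le
          (fun _ _ ↦ (cosh_pos _).le) (cosh_pos _) T
    _ ≤ (∏ t ∈ Finset.range (T + 1), cosh (l * C t)) / cosh (l * ε) := by
        gcongr
        exact integral_cosh_norm_sum_range_le hD hDC hmds' T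
    _ ≤ 2 * exp (-ε ^ 2 / (2 * c ^ 2)) := prod_cosh_div_cosh_le _ _ hc0 hc

theorem stmt9 {Ω : Type*} {m : MeasurableSpace Ω} {μ : Measure Ω} [IsProbabilityMeasure μ]
    {E : Type*} [NormedAddCommGroup E] [InnerProductSpace ℝ E] [CompleteSpace E]
    (ℱ : Filtration ℕ m)
    (D : ℕ → Ω → E) (T : ℕ)
    (hadapted : StronglyAdapted ℱ D)
    (hint : ∀ t, Integrable (D t) μ)
    (hmean0 : ∫ ω, D 0 ω ∂μ = 0)
    (hmds : ∀ t : ℕ, μ[D (t + 1) | ℱ t] =ᵐ[μ] 0)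
    (c : ℝ) (C : ℕ → ℝ)
    (hC : ∀ t, ∀ᵐ ω ∂μ, ‖D t ω‖ ≤ C t)
    (hc : ∑ t ∈ Finset.range (T + 1), C t ^ 2 ≤ c ^ 2)
    (ε : ℝ) (hε : 0 < ε) :
    (μ {ω | ∃ s ≤ T, ε ≤ ‖∑ t ∈ Finset.range (s + 1), D t ω‖}).toReal ≤
      2 * Real.exp (-ε ^ 2 / (2 * c ^ 2)) :=
  stmt9_general ℱ D T hadapted hmds c C hC hc ε hε
end

section
/- Suppose lim_{x→∞} (Ei(x) + Ei(-x)) / (e^x / x) = 1, where Ei is the exponential integral. Let y(t) > 0 satisfy (1/2)(Ei(2y(t)²) + Ei(-2y(t)²)) + 2 log y(t) = C t² + C₀ for constants C > 0, C₀ ∈ ℝ, and suppose y(t) → ∞ as t → ∞. Then y(t)² = Θ(log t) as t → ∞; i.e., there exist constants 0 < c₁ ≤ c₂ and T₀ such that c₁ log t ≤ y(t)² ≤ c₂ log t for all t ≥ T₀. -/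
set_option maxHeartbeats 1600000 in
theorem stmt17 (Ei : ℝ → ℝ)
    (hEi : Filter.Tendsto (fun x => (Ei x + Ei (-x)) / (Real.exp x / x))
      Filter.atTop (nhds 1))
    (y : ℝ → ℝ) (hypos : ∀ t, 0 < y t)
    (C C₀ : ℝ) (hC : 0 < C)
    (heq : ∀ t : ℝ, (1 / 2) * (Ei (2 * (y t) ^ 2) + Ei (-(2 * (y t) ^ 2)))
        + 2 * Real.log (y t) = C * t ^ 2 + C₀)
    (hyinf : Filter.Tendsto y Filter.atTop Filter.atTop) :
    ∃ c₁ c₂ T₀ : ℝ, 0 < c₁ ∧ c₁ ≤ c₂ ∧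
      ∀ t ≥ T₀, c₁ * Real.log t ≤ (y t) ^ 2 ∧ (y t) ^ 2 ≤ c₂ * Real.log t := by
  obtain ⟨M₁, hM₁⟩ := Filter.eventually_atTop.mp
    (hEi.eventually (Ioo_mem_nhds (by norm_num : (1/2:ℝ) < 1) (by norm_num : (1:ℝ) < 2)))
  set M : ℝ := max (max M₁ 56) 2 with hMdef
  obtain ⟨T₁, hT₁⟩ := Filter.eventually_atTop.mp (hyinf.eventually_ge_atTop M)
  refine ⟨1/2, 3, max (max T₁ 1) (max ((2 + |C₀|)/C) (C + |C₀|)), by norm_num, by norm_num, ?_⟩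
  intro t ht
  have htT₁ : T₁ ≤ t := le_trans ((le_max_left T₁ 1).trans (le_max_left _ _)) ht
  have ht1 : (1:ℝ) ≤ t := le_trans ((le_max_right T₁ 1).trans (le_max_left _ _)) ht
  have htC1 : (2 + |C₀|)/C ≤ t :=
    le_trans ((le_max_left _ _).trans (le_max_right _ _)) ht
  have htC2 : C + |C₀| ≤ t :=
    le_trans ((le_max_right _ _).trans (le_max_right _ _)) ht
  have hyM : M ≤ y t := hT₁ t htT₁
  have hM2 : (2:ℝ) ≤ M := le_max_right _ _
  have hMM₁ : M₁ ≤ M := (le_max_left _ _).trans (le_max_left _ _)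
  have hM56 : (56:ℝ) ≤ M := (le_max_right _ _).trans (le_max_left _ _)
  have he := heq t
  set u : ℝ := 2 * (y t) ^ 2 with hudef
  have hyM2 : M ≤ (y t) ^ 2 := by nlinarith
  have huM : 2 * M ≤ u := by rw [hudef]; linarith
  have hu56 : 56 ≤ u := by linarith
  have huM₁ : M₁ ≤ u := by linarith
  have hupos : 0 < u := by linarith
  have hu2 : 2 ≤ u := by linarith
  -- ratio bounds
  obtain ⟨hrl, hru⟩ := hM₁ u huM₁
  have hexpu : 0 < Real.exp u / u := div_pos (Real.exp_pos u) hupos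
  have hA_lo : (1/2) * (Real.exp u / u) < Ei u + Ei (-u) := by
    have := (lt_div_iff₀ hexpu).mp hrl
    linarith
  have hA_up : Ei u + Ei (-u) < 2 * (Real.exp u / u) := by
    have := (div_lt_iff₀ hexpu).mp hru
    linarith
  -- rewrite log term
  have hu2eq : u / 2 = (y t) ^ 2 := by rw [hudef]; ring
  have hlog : 2 * Real.log (y t) = Real.log (u/2) := by
    rw [hu2eq, Real.log_pow]; push_cast; ring
  rw [hlog] at he
  have hlogpos : 0 ≤ Real.log (u/2) := Real.log_nonneg (by linarith)
  have hlogle : Real.log (u/2) ≤ u/2 - 1 := Real.log_le_sub_one_of_pos (by linarith)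
  have huexp : u + 1 ≤ Real.exp u := Real.add_one_le_exp u
  have hdivle : Real.exp u / u ≤ Real.exp u := div_le_self (Real.exp_pos u).le (by linarith)
  -- exp(u/2) ≥ 4u
  have hgt : 4 * u ≤ Real.exp (u/2) := by
    have h4 := Real.add_one_le_exp (u/4)
    have hsq : Real.exp (u/2) = Real.exp (u/4) * Real.exp (u/4) := by
      rw [← Real.exp_add]; ring_nf
    nlinarith [Real.exp_pos (u/4), sq_nonneg (u - 28)]
  have hlow_exp : Real.exp (u/2) ≤ Real.exp u / (4*u) := by
    rw [le_div_iff₀ (by linarith : (0:ℝ) < 4*u)]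
    have hsq : Real.exp u = Real.exp (u/2) * Real.exp (u/2) := by
      rw [← Real.exp_add]; ring_nf
    rw [hsq]
    exact mul_le_mul_of_nonneg_left hgt (Real.exp_pos _).le
  -- bounds on C t^2 + C₀
  have hCt : 2 + |C₀| ≤ t * C := (div_le_iff₀ hC).mp htC1
  have h2t : 2 * t ≤ C * t^2 + C₀ := by
    have h1 : t * (2 + |C₀|) ≤ t * (t * C) :=
      mul_le_mul_of_nonneg_left hCt (by linarith)
    have h2 : |C₀| ≤ t * |C₀| := le_mul_of_one_le_left (abs_nonneg _) ht1
    have h3 := neg_abs_le C₀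
    nlinarith [h1, h2, h3]
  have htsq : (1:ℝ) ≤ t^2 := by nlinarith
  have ht3 : C * t^2 + C₀ ≤ t^3 := by
    have h1 : t^2 * (C + |C₀|) ≤ t^2 * t :=
      mul_le_mul_of_nonneg_left htC2 (sq_nonneg t)
    have h2 : |C₀| ≤ t^2 * |C₀| := le_mul_of_one_le_left (abs_nonneg _) htsq
    have h3 := le_abs_self C₀
    nlinarith [h1, h2, h3]
  -- upper bound on C t^2 + C₀ in terms of exp u
  have hup : C * t^2 + C₀ ≤ 2 * Real.exp u := by linarith
  have hexp_t : t ≤ Real.exp u := by linarith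
  have hlogt : Real.log t ≤ u := (Real.log_le_iff_le_exp (by linarith : (0:ℝ) < t)).mpr hexp_t
  -- lower: exp(u/2) ≤ C t^2 + C₀ ≤ t^3
  have hdiv4 : Real.exp u / (4*u) = (1/4) * (Real.exp u / u) := by ring
  have hlo : Real.exp (u/2) ≤ C * t^2 + C₀ := by
    rw [hdiv4] at hlow_exp
    linarith
  have hexp_le : Real.exp (u/2) ≤ t^3 := le_trans hlo ht3
  have hu_log : u/2 ≤ Real.log (t^3) :=
    (Real.le_log_iff_exp_le (by positivity : (0:ℝ) < t^3)).mpr hexp_le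
  have hlog3 : Real.log (t^3) = 3 * Real.log t := by
    rw [Real.log_pow]; push_cast; ring
  constructor
  · linarith [hu2eq]
  · rw [hlog3] at hu_log
    linarith [hu2eq]
end
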